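/- Let b be an ε-equilibrium of the simultaneous first-price auction game (with any tie-breaking rule) in which there are no ties, i.e., for every item j and all bidders i ≠ i′ one has b_{ij} ≠ b_{i′j}. Let (S_1,…,S_n) be the induced allocation (each item goes to its unique highest bidder) and let p_j = max_i b_{ij}. Then the allocation and prices form an approximate Walrasian equilibrium: for every bidder i and every subset T of the items, v_i(T) − Σ_{j∈T} p_j ≤ v_i(S_i) − Σ_{j∈S_i} p_j + (m+1)ε. -/

import Mathlib

open MeasureTheory Finset

/-- A valuation: monotone non-decreasing with value `0` on the empty set. -/
def MonotoneVal {M : Type*} (v : Finset M → ℝ) : Prop :=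
  v ∅ = 0 ∧ ∀ S T : Finset M, S ⊆ T → v S ≤ v T

/-- `S` assigns every item to exactly one bidder (it is a partition of the items). -/
def IsAllocation {N M : Type*} (S : N → Finset M) : Prop :=
  ∀ j : M, ∃! i : N, j ∈ S i

/-- A tie-breaking rule: it maps every bid profile to a partition of the items
in which every item goes to a bidder whose bid on it is highest. -/
structure TieRule (N M : Type*) where
  alloc : (N → M → ℝ) → N → Finset M
  partition : ∀ b, IsAllocation (alloc b)
  highest : ∀ b i j, j ∈ alloc b i → ∀ i', b i' j ≤ b i j

/-- Bidder `i`'s (quasi-linear) utility in the simultaneous first-price auction. -/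
def utility {N M : Type*} (v : N → Finset M → ℝ) (T : TieRule N M)
    (b : N → M → ℝ) (i : N) : ℝ :=
  v i (T.alloc b i) - ∑ j ∈ T.alloc b i, b i j

/-- Pure Nash equilibrium: no bidder can strictly gain by a unilateral
(nonnegative) deviation. -/
def PureNash {N M : Type*} [DecidableEq N] (v : N → Finset M → ℝ) (T : TieRule N M)
    (b : N → M → ℝ) : Prop :=
  ∀ (i : N) (b' : M → ℝ), (∀ j, 0 ≤ b' j) →
    utility v T (Function.update b i b') i ≤ utility v T b i

/-- `ε`-equilibrium: no bidder can gain more than `ε` by a unilateral deviation. -/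
def EpsNash {N M : Type*} [DecidableEq N] (v : N → Finset M → ℝ) (T : TieRule N M)
    (b : N → M → ℝ) (ε : ℝ) : Prop :=
  ∀ (i : N) (b' : M → ℝ), (∀ j, 0 ≤ b' j) →
    utility v T (Function.update b i b') i ≤ utility v T b i + ε

/-- Walrasian equilibrium: a partition and nonnegative item prices such that
every bidder receives a demanded set. -/
def Walrasian {N M : Type*} (v : N → Finset M → ℝ) (S : N → Finset M) (p : M → ℝ) : Prop :=
  IsAllocation S ∧ (∀ j, 0 ≤ p j) ∧
    ∀ (i : N) (T : Finset M), v i T - ∑ j ∈ T, p j ≤ v i (S i) - ∑ j ∈ S i, p j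

/-- Social welfare of an allocation. -/
def welfare {N M : Type*} [Fintype N] (v : N → Finset M → ℝ) (S : N → Finset M) : ℝ :=
  ∑ i, v i (S i)

/-- Expected utility of bidder `i` when bidders bid independently according to
the mixed strategies `σ`. -/
noncomputable def expectedUtility {N M : Type*} [Fintype N]
    (v : N → Finset M → ℝ) (T : TieRule N M) (σ : N → Measure (M → ℝ)) (i : N) : ℝ :=
  ∫ b, utility v T b i ∂(Measure.pi σ)

/-- Mixed Nash equilibrium: no bidder can gain by deviating to any fixed
(nonnegative) bid vector. -/
def MixedNash {N M : Type*} [Fintype N] [DecidableEq N]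
    (v : N → Finset M → ℝ) (T : TieRule N M) (σ : N → Measure (M → ℝ)) : Prop :=
  ∀ (i : N) (b' : M → ℝ), (∀ j, 0 ≤ b' j) →
    expectedUtility v T (Function.update σ i (Measure.dirac b')) i ≤
      expectedUtility v T σ i

/-- Expected social welfare of a profile of mixed strategies. -/
noncomputable def expectedWelfare {N M : Type*} [Fintype N]
    (v : N → Finset M → ℝ) (T : TieRule N M) (σ : N → Measure (M → ℝ)) : ℝ :=
  ∫ b, welfare v (T.alloc b) ∂(Measure.pi σ)

/-- Every mixed strategy is supported on nonnegative bid vectors. -/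
def NonnegMixed {N M : Type*} (σ : N → Measure (M → ℝ)) : Prop :=
  ∀ i, σ i {b | ∀ j, 0 ≤ b j} = 1

/-- The AND valuation: value `1` on the full set of items, `0` on proper subsets. -/
def andVal (M : Type*) [Fintype M] [DecidableEq M] : Finset M → ℝ :=
  fun S => if S = Finset.univ then 1 else 0

/-- The OR valuation: value `v` on every nonempty set of items, `0` on `∅`. -/
def orVal (M : Type*) (v : ℝ) : Finset M → ℝ :=
  fun S => if S.Nonempty then v else 0

/-- A single-minded valuation: value `w` on every superset of `S`, `0` otherwise. -/
def singleMinded {M : Type*} [DecidableEq M] (S : Finset M) (w : ℝ) : Finset M → ℝ :=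
  fun T => if S ⊆ T then w else 0

/-- `β`-XOS (β-fractionally subadditive) valuation. -/
def BetaXOS {M : Type*} (β : ℝ) (v : Finset M → ℝ) : Prop :=
  ∃ (k : ℕ) (lam : Fin (k + 1) → M → ℝ),
    (∀ l j, 0 ≤ lam l j) ∧
    ∀ S : Finset M,
      (Finset.univ.sup' Finset.univ_nonempty fun l => ∑ j ∈ S, lam l j) ≤ v S ∧
      v S / β ≤ Finset.univ.sup' Finset.univ_nonempty fun l => ∑ j ∈ S, lam l j

/-
Bidder `i` can deviate by bidding `p j + δ` on the items of `Tset` and `0` elsewhere: he then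
wins at least `Tset`, so by monotonicity his utility is at least
`v i Tset - ∑_{j ∈ Tset} p j - |Tset| δ`. Since he pays `p j` for each item he currently wins,
his current utility is `v i (T.alloc b i) - ∑_{j ∈ T.alloc b i} p j`, and the `ε`-equilibrium
condition bounds the gain by `ε` for every `δ > 0`.
-/

namespace TieRule

variable {N M : Type*} (T : TieRule N M)

theorem bid_eq_of_mem_alloc {b : N → M → ℝ} {p : M → ℝ} {i : N} {j : M}
    (hp : IsGreatest (Set.range fun k => b k j) (p j)) (hj : j ∈ T.alloc b i) :
    b i j = p j := by
  obtain ⟨k, hk⟩ := hp.1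
  exact le_antisymm (hp.2 ⟨i, rfl⟩) (hk ▸ T.highest b i j hj k)

theorem utility_eq_sub_sum_price (v : N → Finset M → ℝ) {b : N → M → ℝ} {p : M → ℝ}
    (hp : ∀ j, IsGreatest (Set.range fun k => b k j) (p j)) (i : N) :
    utility v T b i = v i (T.alloc b i) - ∑ j ∈ T.alloc b i, p j := by
  rw [utility, sum_congr rfl fun j hj => T.bid_eq_of_mem_alloc (hp j) hj]

theorem subset_alloc_update_of_forall_lt [DecidableEq N] {b : N → M → ℝ} {i : N}
    {c : M → ℝ} {S : Finset M} (hS : ∀ j ∈ S, ∀ k ≠ i, b k j < c j) :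
    S ⊆ T.alloc (Function.update b i c) i := by
  intro j hj
  obtain ⟨k, hk, -⟩ := T.partition (Function.update b i c) j
  by_cases hki : k = i
  · exact hki ▸ hk
  · have hle := T.highest _ k j hk i
    rw [Function.update_self, Function.update_of_ne hki] at hle
    exact absurd hle (hS j hj k hki).not_ge

theorem sub_sum_le_utility_update_indicator [DecidableEq N] {v : N → Finset M → ℝ}
    {i : N} (hv : Monotone (v i)) {b : N → M → ℝ} {c : M → ℝ} {S : Finset M}
    (hS : ∀ j ∈ S, ∀ k ≠ i, b k j < c j) :
    v i S - ∑ j ∈ S, c j ≤ utility v T (Function.update b i ((S : Set M).indicator c)) i := by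
  have hsub : S ⊆ T.alloc (Function.update b i ((S : Set M).indicator c)) i :=
    T.subset_alloc_update_of_forall_lt fun j hj k hk => by
      simpa [Set.indicator_of_mem (mem_coe.2 hj)] using hS j hj k hk
  rw [utility, Function.update_self, sum_indicator_subset c hsub]
  exact sub_le_sub_right (hv hsub) _

end TieRule

theorem EpsNash.sub_sum_le_utility_add {N M : Type*} [DecidableEq N]
    {v : N → Finset M → ℝ} {T : TieRule N M} {b : N → M → ℝ} {ε : ℝ}
    (hN : EpsNash v T b ε) {i : N} (hv : Monotone (v i)) {p : M → ℝ}
    (hp0 : ∀ j, 0 ≤ p j) (hbp : ∀ k j, b k j ≤ p j) (S : Finset M) :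
    v i S - ∑ j ∈ S, p j ≤ utility v T b i + ε := by
  refine le_of_forall_pos_le_add fun η hη => ?_
  set δ := η / (#S + 1)
  have hδ : 0 < δ := by positivity
  have hSδ : #S * δ ≤ η := by
    calc (#S : ℝ) * δ ≤ (#S + 1) * δ := by gcongr; linarith
      _ = η := mul_div_cancel₀ η (by positivity)
  have hdev := T.sub_sum_le_utility_update_indicator hv (c := fun j => p j + δ) (S := S)
    fun j _ k _ => (hbp k j).trans_lt (lt_add_of_pos_right _ hδ)
  have hgain := hN i ((S : Set M).indicator fun j => p j + δ)
    (Set.indicator_nonneg fun j _ => add_nonneg (hp0 j) hδ.le)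
  rw [sum_add_distrib, sum_const, nsmul_eq_mul] at hdev
  linarith

theorem eps_nash_to_approx_walrasian_general {n m : ℕ} (v : Fin n → Finset (Fin m) → ℝ)
    (hmono : ∀ i, MonotoneVal (v i))
    (T : TieRule (Fin n) (Fin m)) (b : Fin n → Fin m → ℝ)
    (hb : ∀ i j, 0 ≤ b i j)
    (ε : ℝ) (hε : 0 ≤ ε)
    (hN : EpsNash v T b ε)
    (p : Fin m → ℝ) (hp : ∀ j, IsGreatest (Set.range fun i => b i j) (p j)) :
    ∀ (i : Fin n) (Tset : Finset (Fin m)),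
      v i Tset - ∑ j ∈ Tset, p j ≤
        v i (T.alloc b i) - ∑ j ∈ T.alloc b i, p j + (m + 1) * ε := by
  intro i Tset
  have hbp : ∀ k j, b k j ≤ p j := fun k j => (hp j).2 ⟨k, rfl⟩
  have hgap := hN.sub_sum_le_utility_add (fun _ _ => (hmono i).2 _ _)
    (fun j => (hb i j).trans (hbp i j)) hbp Tset
  rw [T.utility_eq_sub_sum_price v hp] at hgap
  have : ε ≤ (m + 1) * ε := le_mul_of_one_le_left hε (by linarith [m.cast_nonneg (α := ℝ)])
  linarith

/-- An `ε`-equilibrium without ties, with the induced allocation and prices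
`p j = max_i b i j`, forms an approximate Walrasian equilibrium: every bidder prefers his
assigned set over any set `T` up to an additive `(m+1)ε`. -/
theorem eps_nash_to_approx_walrasian {n m : ℕ} (v : Fin n → Finset (Fin m) → ℝ)
    (hmono : ∀ i, MonotoneVal (v i))
    (T : TieRule (Fin n) (Fin m)) (b : Fin n → Fin m → ℝ)
    (hb : ∀ i j, 0 ≤ b i j)
    (ε : ℝ) (hε : 0 ≤ ε)
    (hN : EpsNash v T b ε)
    (hnoties : ∀ (j : Fin m) (i i' : Fin n), i ≠ i' → b i j ≠ b i' j)
    (p : Fin m → ℝ) (hp : ∀ j, IsGreatest (Set.range fun i => b i j) (p j)) :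
    ∀ (i : Fin n) (Tset : Finset (Fin m)),
      v i Tset - ∑ j ∈ Tset, p j ≤
        v i (T.alloc b i) - ∑ j ∈ T.alloc b i, p j + (m + 1) * ε :=
  eps_nash_to_approx_walrasian_general v hmono T b hb ε hε hN p hp
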